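/- arXiv:1207.6944 — 6 statements merged into one kernel-verified Lean document; each statement's English description precedes it below -/
import Mathlib

section
/- Let q ≥ 2 and suppose ε = Σ_{i=0}^{n} δ_i·q^i with n ≥ 1, |δ_i| ≤ 2q−2, |δ_n| = 1, and δ_{n−1} either zero or of the same sign as δ_n. Then |ε| ≥ 2 and ε has the same sign as δ_n. -/
/-
Multiplying all digits by `u = δ n = ±1` reduces to the case `δ n = 1`, `δ (n-1) ≥ 0`. Then the
two top digits contribute at least `q ^ n ≥ 2 q ^ (n-1)`, while the lower digits contribute at
least `-(2q - 2)(1 + q + ⋯ + q ^ (n-2)) = -2 (q ^ (n-1) - 1)`; hence `u ε ≥ 2`.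
-/

lemma abs_sum_digits_mul_pow_le (q : ℤ) (hq : 0 ≤ q) (m : ℕ) (δ : ℕ → ℤ)
    (hD : ∀ i < m, |δ i| ≤ 2 * q - 2) :
    |∑ i ∈ Finset.range m, δ i * q ^ i| ≤ 2 * (q ^ m - 1) :=
  calc |∑ i ∈ Finset.range m, δ i * q ^ i|
      ≤ ∑ i ∈ Finset.range m, |δ i * q ^ i| := Finset.abs_sum_le_sum_abs _ _
    _ ≤ ∑ i ∈ Finset.range m, (2 * q - 2) * q ^ i := by
        refine Finset.sum_le_sum fun i hi => ?_
        rw [abs_mul, abs_pow, abs_of_nonneg hq]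
        exact mul_le_mul_of_nonneg_right (hD i (Finset.mem_range.mp hi)) (by positivity)
    _ = 2 * ((∑ i ∈ Finset.range m, q ^ i) * (q - 1)) := by
        rw [Finset.sum_mul, Finset.mul_sum]
        exact Finset.sum_congr rfl fun i _ => by ring
    _ = 2 * (q ^ m - 1) := by rw [geom_sum_mul]

lemma two_le_sum_digits_mul_pow_of_top_eq_one (q : ℤ) (hq : 2 ≤ q) (m : ℕ) (δ : ℕ → ℤ)
    (hD : ∀ i < m, |δ i| ≤ 2 * q - 2) (htop : δ (m + 1) = 1) (hprev : 0 ≤ δ m) :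
    2 ≤ ∑ i ∈ Finset.range (m + 2), δ i * q ^ i := by
  have hlow := (abs_le.mp (abs_sum_digits_mul_pow_le q (by linarith) m δ hD)).1
  have hmid : 0 ≤ δ m * q ^ m := mul_nonneg hprev (by positivity)
  have htop' : 2 * q ^ m ≤ δ (m + 1) * q ^ (m + 1) := by
    rw [htop, one_mul, pow_succ']
    exact mul_le_mul_of_nonneg_right hq (by positivity)
  rw [Finset.sum_range_succ, Finset.sum_range_succ]
  linarith

lemma Int.mul_nonneg_of_sign_eq {u v : ℤ} (h : v.sign = u.sign) : 0 ≤ u * v := by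
  rw [← Int.sign_nonneg_iff, Int.sign_mul, ← h]
  exact mul_self_nonneg _

lemma Int.two_le_abs_and_sign_eq_of_two_le_mul {u ε : ℤ} (hu : |u| = 1) (h : 2 ≤ u * ε) :
    2 ≤ |ε| ∧ ε.sign = u.sign := by
  rcases abs_eq zero_le_one |>.mp hu with rfl | rfl
  · exact ⟨by rw [abs_of_pos (by linarith)]; linarith, Int.sign_eq_one_of_pos (by linarith)⟩
  · exact ⟨by rw [abs_of_neg (by linarith)]; linarith, Int.sign_eq_neg_one_of_neg (by linarith)⟩

/-- if `|δ n| = 1` and `δ (n-1)` is zero or has the same sign as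
`δ n`, then `|ε| ≥ 2` and `ε` has the same sign as `δ n`. -/
theorem stmt_3 (q : ℤ) (hq : 2 ≤ q) (n : ℕ) (hn : 1 ≤ n) (δ : ℕ → ℤ)
    (hD : ∀ i, i ≤ n → |δ i| ≤ 2 * q - 2)
    (htop : |δ n| = 1)
    (hprev : δ (n - 1) = 0 ∨ (δ (n - 1)).sign = (δ n).sign) :
    2 ≤ |∑ i ∈ Finset.range (n + 1), δ i * q ^ i| ∧
      (∑ i ∈ Finset.range (n + 1), δ i * q ^ i).sign = (δ n).sign := by
  obtain ⟨m, rfl⟩ : ∃ m, n = m + 1 := ⟨n - 1, by omega⟩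
  refine Int.two_le_abs_and_sign_eq_of_two_le_mul htop ?_
  rw [Finset.mul_sum]
  simp_rw [← mul_assoc]
  refine two_le_sum_digits_mul_pow_of_top_eq_one q hq m (fun i => δ (m + 1) * δ i)
    (fun i hi => ?_) ?_ ?_
  · rw [abs_mul, htop, one_mul]
    exact hD i (by omega)
  · rw [← abs_mul_abs_self, htop, one_mul]
  · rw [Nat.add_sub_cancel] at hprev
    rcases hprev with h | h
    · rw [h, mul_zero]
    · exact Int.mul_nonneg_of_sign_eq h
end

section
/- Let q ≥ 2 and let S, T be power sums with coefficients in D = {−q+1,...,q−1} such that both are compact (irreducible under the rewriting system P). If S and T are lexicographically comparable with S <_lex T (comparing coefficients of higher powers of q first), then e(S) < e(T). In particular, distinct compact power sums have distinct values. -/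
/-- A power sum `α` is reducible if some rule of the rewriting system `𝒫`
applies: (1)/(2) adjacent coefficients of opposite signs, (3)/(4) a nonzero
coefficient followed by a run of `±(q-1)`'s and a suitable end coefficient. -/
def PSReducible (q : ℤ) (α : ℕ → ℤ) : Prop :=
  (∃ i, 0 < α i ∧ α (i + 1) < 0) ∨
  (∃ i, α i < 0 ∧ 0 < α (i + 1)) ∨
  (∃ i j, i < j ∧ 0 < α i ∧ (∀ k, i < k → k ≤ j → α k = q - 1) ∧
    α (j + 1) < q - 1) ∨
  (∃ i j, i < j ∧ α i < 0 ∧ (∀ k, i < k → k ≤ j → α k = -q + 1) ∧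
    -q + 1 < α (j + 1))

/-- Upper bound for partial sums, given the "no positive coefficient just
below a `q-1`" property. -/
lemma psAux_up (q : ℤ) (hq : 2 ≤ q) (γ : ℕ → ℤ) (hD : ∀ i, γ i ≤ q - 1)
    (h3 : ∀ n, γ (n + 1) = q - 1 → γ n ≤ 0) :
    ∀ n, (q + 1) * (∑ i ∈ Finset.range n, γ i * q ^ i) ≤ q ^ (n + 1) - 1 := by
  intro n
  induction n using Nat.strong_induction_on with
  | _ n ih =>
  match n with
  | 0 =>
      simp only [Finset.range_zero, Finset.sum_empty, mul_zero, zero_add, pow_one]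
      linarith
  | 1 =>
      simp only [Finset.sum_range_one, pow_zero, mul_one]
      have h0 := hD 0
      have he : (q:ℤ) ^ (1 + 1) = q * q := by ring
      rw [he]
      nlinarith
  | (k+2) =>
      have hz : (0:ℤ) < q ^ k := pow_pos (by linarith) k
      rw [Finset.sum_range_succ]
      by_cases hc : γ (k+1) = q - 1
      · have hg : γ k ≤ 0 := h3 k hc
        have hk := ih k (by omega)
        rw [Finset.sum_range_succ, hc]
        have h4 : γ k * q ^ k ≤ 0 := mul_nonpos_of_nonpos_of_nonneg hg hz.le
        have h5 : (q + 1) * (γ k * q ^ k) ≤ 0 :=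
          mul_nonpos_of_nonneg_of_nonpos (by linarith) h4
        simp only [pow_succ] at hk ⊢
        nlinarith [hk, h5, hz]
      · have hc' : γ (k+1) ≤ q - 2 := by have := hD (k+1); omega
        have hk1 := ih (k+1) (by omega)
        have hz1 : (0:ℤ) < q ^ (k+1) := pow_pos (by linarith) (k+1)
        have h5 : γ (k+1) * q ^ (k+1) ≤ (q - 2) * q ^ (k+1) :=
          mul_le_mul_of_nonneg_right hc' hz1.le
        have h6 : (q + 1) * (γ (k+1) * q ^ (k+1)) ≤ (q + 1) * ((q - 2) * q ^ (k+1)) :=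
          mul_le_mul_of_nonneg_left h5 (by linarith)
        simp only [pow_succ] at hk1 h6 ⊢
        nlinarith [hk1, h6, hz]

/-- Strengthened upper bound when the next coefficient is negative. -/
lemma psAux_up' (q : ℤ) (hq : 2 ≤ q) (γ : ℕ → ℤ) (hD : ∀ i, γ i ≤ q - 1)
    (h3 : ∀ n, γ (n + 1) = q - 1 → γ n ≤ 0)
    (h1 : ∀ n, γ (n + 1) < 0 → γ n ≤ 0) :
    ∀ n, γ n < 0 → (q + 1) * (∑ i ∈ Finset.range n, γ i * q ^ i) ≤ q ^ n - 1 := by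
  intro n hn
  match n with
  | 0 =>
      simp only [Finset.range_zero, Finset.sum_empty, mul_zero, pow_zero]
      linarith
  | (k+1) =>
      have hg : γ k ≤ 0 := h1 k hn
      have hk := psAux_up q hq γ hD h3 k
      have hz : (0:ℤ) < q ^ k := pow_pos (by linarith) k
      rw [Finset.sum_range_succ]
      have h4 : γ k * q ^ k ≤ 0 := mul_nonpos_of_nonpos_of_nonneg hg hz.le
      have h5 : (q + 1) * (γ k * q ^ k) ≤ 0 :=
        mul_nonpos_of_nonneg_of_nonpos (by linarith) h4
      nlinarith [hk, h5]

/-- Rule 1: no positive coefficient just below a negative one. -/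
lemma psFact1 (q : ℤ) (α : ℕ → ℤ) (hαc : ¬ PSReducible q α) :
    ∀ n, α (n + 1) < 0 → α n ≤ 0 := by
  intro n h
  by_contra hc
  push_neg at hc
  exact hαc (Or.inl ⟨n, hc, h⟩)

/-- Rule 2: no negative coefficient just below a positive one. -/
lemma psFact2 (q : ℤ) (α : ℕ → ℤ) (hαc : ¬ PSReducible q α) :
    ∀ n, 0 < α (n + 1) → 0 ≤ α n := by
  intro n h
  by_contra hc
  push_neg at hc
  exact hαc (Or.inr (Or.inl ⟨n, hc, h⟩))

/-- Rule 3 (with finite support): no positive coefficient just below a `q-1`. -/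
lemma psFact3 (q : ℤ) (hq : 2 ≤ q) (α : ℕ → ℤ) (hαD : ∀ i, |α i| ≤ q - 1)
    (m : ℕ) (hα0 : ∀ i, m ≤ i → α i = 0) (hαc : ¬ PSReducible q α) :
    ∀ n, α (n + 1) = q - 1 → α n ≤ 0 := by
  intro n hn
  by_contra hc
  push_neg at hc
  apply hαc
  classical
  have hR : ∃ t, α (n + 1 + t) ≠ q - 1 := by
    refine ⟨m, ?_⟩
    rw [hα0 (n + 1 + m) (by omega)]
    omega
  set t0 := Nat.find hR with ht0def
  have ht0 : α (n + 1 + t0) ≠ q - 1 := Nat.find_spec hR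
  have ht0pos : 0 < t0 := by
    rcases Nat.eq_zero_or_pos t0 with h0 | h0
    · rw [h0] at ht0; simp at ht0; exact absurd hn ht0
    · exact h0
  refine Or.inr (Or.inr (Or.inl ⟨n, n + t0, by omega, hc, ?_, ?_⟩))
  · intro k hk1 hk2
    have hs : k - (n + 1) < t0 := by omega
    have := Nat.find_min hR hs
    have hidx : n + 1 + (k - (n + 1)) = k := by omega
    rw [hidx] at this
    exact not_not.mp this
  · have hb := hαD (n + t0 + 1)
    have hidx : n + t0 + 1 = n + 1 + t0 := by omega
    rw [hidx] at hb ⊢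
    rcases abs_le.mp hb with ⟨_, h2⟩
    omega

/-- Rule 4 (with finite support): no negative coefficient just below a `-q+1`. -/
lemma psFact4 (q : ℤ) (hq : 2 ≤ q) (α : ℕ → ℤ) (hαD : ∀ i, |α i| ≤ q - 1)
    (m : ℕ) (hα0 : ∀ i, m ≤ i → α i = 0) (hαc : ¬ PSReducible q α) :
    ∀ n, α (n + 1) = -q + 1 → 0 ≤ α n := by
  intro n hn
  by_contra hc
  push_neg at hc
  apply hαc
  classical
  have hR : ∃ t, α (n + 1 + t) ≠ -q + 1 := by
    refine ⟨m, ?_⟩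
    rw [hα0 (n + 1 + m) (by omega)]
    omega
  set t0 := Nat.find hR with ht0def
  have ht0 : α (n + 1 + t0) ≠ -q + 1 := Nat.find_spec hR
  have ht0pos : 0 < t0 := by
    rcases Nat.eq_zero_or_pos t0 with h0 | h0
    · rw [h0] at ht0; simp at ht0; exact absurd hn ht0
    · exact h0
  refine Or.inr (Or.inr (Or.inr ⟨n, n + t0, by omega, hc, ?_, ?_⟩))
  · intro k hk1 hk2
    have hs : k - (n + 1) < t0 := by omega
    have := Nat.find_min hR hs
    have hidx : n + 1 + (k - (n + 1)) = k := by omega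
    rw [hidx] at this
    exact not_not.mp this
  · have hb := hαD (n + t0 + 1)
    have hidx : n + t0 + 1 = n + 1 + t0 := by omega
    rw [hidx] at hb ⊢
    rcases abs_le.mp hb with ⟨h1, _⟩
    omega

/-- on compact power sums, the lexicographic order (higher powers
first) implies the order of values; in particular distinct compact power sums
have distinct values. -/
theorem stmt_6 (q : ℤ) (hq : 2 ≤ q) (α β : ℕ → ℤ)
    (hαD : ∀ i, |α i| ≤ q - 1) (hβD : ∀ i, |β i| ≤ q - 1)
    (m : ℕ) (hα0 : ∀ i, m ≤ i → α i = 0) (hβ0 : ∀ i, m ≤ i → β i = 0)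
    (hαc : ¬ PSReducible q α) (hβc : ¬ PSReducible q β)
    (hlex : ∃ i, α i < β i ∧ ∀ j, i < j → α j = β j) :
    (∑ i ∈ Finset.range m, α i * q ^ i) <
      ∑ i ∈ Finset.range m, β i * q ^ i := by
  obtain ⟨i, hi, hagree⟩ := hlex
  have him : i < m := by
    by_contra h
    push_neg at h
    rw [hα0 i h, hβ0 i h] at hi
    omega
  -- facts for α
  have hDα : ∀ k, α k ≤ q - 1 := fun k => (abs_le.mp (hαD k)).2
  have h3α : ∀ n, α (n + 1) = q - 1 → α n ≤ 0 := psFact3 q hq α hαD m hα0 hαc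
  have h1α : ∀ n, α (n + 1) < 0 → α n ≤ 0 := psFact1 q α hαc
  -- facts for γ = -β
  set γ : ℕ → ℤ := fun k => -β k with hγdef
  have hDγ : ∀ k, γ k ≤ q - 1 := by
    intro k
    have := (abs_le.mp (hβD k)).1
    simp only [hγdef]
    linarith
  have h3γ : ∀ n, γ (n + 1) = q - 1 → γ n ≤ 0 := by
    intro n h
    have hb : β (n + 1) = -q + 1 := by simp only [hγdef] at h; linarith
    have := psFact4 q hq β hβD m hβ0 hβc n hb
    simp only [hγdef]
    linarith
  have h1γ : ∀ n, γ (n + 1) < 0 → γ n ≤ 0 := by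
    intro n h
    have hb : 0 < β (n + 1) := by simp only [hγdef] at h; linarith
    have := psFact2 q β hβc n hb
    simp only [hγdef]
    linarith
  have hγsum : ∀ n, (∑ k ∈ Finset.range n, γ k * q ^ k)
      = -(∑ k ∈ Finset.range n, β k * q ^ k) := by
    intro n
    simp [hγdef, neg_mul, Finset.sum_neg_distrib]
  -- reduce sums to range (i+1)
  have hsub : Finset.range (i + 1) ⊆ Finset.range m :=
    Finset.range_subset_range.mpr (by omega)
  have key : ∑ k ∈ Finset.range m, (β k - α k) * q ^ k
      = ∑ k ∈ Finset.range (i + 1), (β k - α k) * q ^ k := by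
    refine (Finset.sum_subset hsub ?_).symm
    intro x hx hx'
    have hxi : i < x := by
      simp only [Finset.mem_range, not_lt] at hx'
      omega
    rw [hagree x hxi]
    ring
  have hsplit : ∑ k ∈ Finset.range m, (β k - α k) * q ^ k
      = (∑ k ∈ Finset.range m, β k * q ^ k) - ∑ k ∈ Finset.range m, α k * q ^ k := by
    rw [← Finset.sum_sub_distrib]
    congr 1
    ext k
    ring
  rw [← sub_pos, ← hsplit, key, Finset.sum_range_succ]
  have hsplit2 : ∑ k ∈ Finset.range i, (β k - α k) * q ^ k
      = (∑ k ∈ Finset.range i, β k * q ^ k) - ∑ k ∈ Finset.range i, α k * q ^ k := by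
    rw [← Finset.sum_sub_distrib]
    congr 1
    ext k
    ring
  rw [hsplit2]
  set Sa := ∑ k ∈ Finset.range i, α k * q ^ k with hSa
  set Sb := ∑ k ∈ Finset.range i, β k * q ^ k with hSb
  have hz : (0:ℤ) < q ^ i := pow_pos (by linarith) i
  have hgap : 1 ≤ β i - α i := by omega
  have hX : q ^ i ≤ (β i - α i) * q ^ i := by
    nlinarith
  by_cases hpos : 0 < β i
  · have hA := psAux_up q hq α hDα h3α i
    have hB := psAux_up' q hq γ hDγ h3γ h1γ i (by simp only [hγdef]; linarith)
    rw [hγsum i] at hB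
    simp only [pow_succ] at hA
    -- hA : (q+1)*Sa ≤ q^i * q - 1 ; hB : (q+1)*(-Sb) ≤ q^i - 1
    by_contra hno
    push_neg at hno
    nlinarith [hA, hB, hX, hz, hno]
  · have hαneg : α i < 0 := by omega
    have hA := psAux_up' q hq α hDα h3α h1α i hαneg
    have hB := psAux_up q hq γ hDγ h3γ i
    rw [hγsum i] at hB
    simp only [pow_succ] at hB
    by_contra hno
    push_neg at hno
    nlinarith [hA, hB, hX, hz, hno]
end

section
/- Let q ≥ 2. The rewriting system P on base-q power sums is terminating: there is no infinite sequence S_1 → S_2 → ... of applications of rules of P. -/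
/-- One rewriting step of the system `𝒫` on base-`q` power sums
(rules (1)–(4) of the paper), given as a relation on coefficient sequences. -/
def PSStep (q : ℤ) (α β : ℕ → ℤ) : Prop :=
  (∃ i, 0 < α i ∧ α (i + 1) < 0 ∧
    β = fun k => if k = i then α i - q
      else if k = i + 1 then α (i + 1) + 1 else α k) ∨
  (∃ i, α i < 0 ∧ 0 < α (i + 1) ∧
    β = fun k => if k = i then α i + q
      else if k = i + 1 then α (i + 1) - 1 else α k) ∨
  (∃ i j, i < j ∧ 0 < α i ∧ (∀ k, i < k → k ≤ j → α k = q - 1) ∧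
    α (j + 1) < q - 1 ∧
    β = fun k => if k = i then α i - q
      else if i < k ∧ k ≤ j then 0
      else if k = j + 1 then α (j + 1) + 1 else α k) ∨
  (∃ i j, i < j ∧ α i < 0 ∧ (∀ k, i < k → k ≤ j → α k = -q + 1) ∧
    -q + 1 < α (j + 1) ∧
    β = fun k => if k = i then α i + q
      else if i < k ∧ k ≤ j then 0
      else if k = j + 1 then α (j + 1) - 1 else α k)

open Finset

/-!
Every rule preserves the value `V = ∑ αₖ qᵏ` and does not increase the number `N` of nonzero
digits. The value pins the support down: a zero digit at a position `m` with `|V| < qᵐ` forces all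
higher digits to vanish, so along a chain the support stays below `m + N` for one fixed `m`.
Below that bound, `∑_{k ∈ support} 2 ^ (C - k)` strictly decreases, except for instances of rules
(1) and (2) that keep the support; such a step flips the sign of digit `i` to that of digit `i + 1`,
so a sign change between consecutive nonzero digits moves down to a lower position or cancels
with another one. Hence the pair of the two weights decreases lexicographically.
-/

namespace PowerSum

section Digits

variable {q : ℤ} {α : ℕ → ℤ} {S T : Finset ℕ}

lemma sum_support_mul_pow_eq_of_subset {U : Finset ℕ} (hS : ∀ k, k ∈ S ↔ α k ≠ 0) (hSU : S ⊆ U) :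
    ∑ k ∈ S, α k * q ^ k = ∑ k ∈ U, α k * q ^ k :=
  sum_subset hSU fun k _ hk => by rw [not_not.mp ((hS k).not.mp hk), zero_mul]

lemma abs_sum_mul_pow_lt (hq : 0 < q) {m : ℕ} (hd : ∀ k ∈ T, |α k| ≤ q - 1)
    (hT : ∀ k ∈ T, k < m) : |∑ k ∈ T, α k * q ^ k| < q ^ m := by
  have hgeom := geom_sum_mul q m
  calc |∑ k ∈ T, α k * q ^ k| ≤ ∑ k ∈ T, |α k| * q ^ k := by
        refine (abs_sum_le_sum_abs _ _).trans_eq (sum_congr rfl fun k _ => ?_)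
        rw [abs_mul, abs_pow, abs_of_pos hq]
    _ ≤ ∑ k ∈ T, (q - 1) * q ^ k :=
        sum_le_sum fun k hk => mul_le_mul_of_nonneg_right (hd k hk) (by positivity)
    _ ≤ ∑ k ∈ range m, (q - 1) * q ^ k :=
        sum_le_sum_of_subset_of_nonneg (fun k hk => mem_range.mpr (hT k hk))
          fun k _ _ => mul_nonneg (by omega) (by positivity)
    _ < q ^ m := by rw [← mul_sum]; linarith

lemma pow_le_abs_sum_mul_pow (hq : 0 < q) {p : ℕ} (hp : p ∈ T) (hαp : α p ≠ 0)
    (hαq : |α p| < q) (hT : ∀ k ∈ T, p ≤ k) : q ^ p ≤ |∑ k ∈ T, α k * q ^ k| := by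
  obtain ⟨c, hc⟩ : q ^ (p + 1) ∣ ∑ k ∈ T.erase p, α k * q ^ k := dvd_sum fun k hk =>
    dvd_mul_of_dvd_right (pow_dvd_pow q (by have := mem_erase.mp hk; grind)) _
  have hne : α p + q * c ≠ 0 := fun h => by
    have hdvd : q ∣ α p := ⟨-c, by linarith⟩
    linarith [Int.le_of_dvd (abs_pos.mpr hαp) ((dvd_abs _ _).mpr hdvd)]
  rw [← add_sum_erase T _ hp, hc, show α p * q ^ p + q ^ (p + 1) * c = q ^ p * (α p + q * c) by
    ring, abs_mul, abs_of_pos (pow_pos hq p)]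
  exact le_mul_of_one_le_right (by positivity) (Int.one_le_abs hne)

lemma lt_of_mem_support_of_eq_zero (hq : 2 ≤ q) (hd : ∀ k, |α k| ≤ q - 1)
    (hS : ∀ k, k ∈ S ↔ α k ≠ 0) {m : ℕ} (hm : α m = 0) (hV : |∑ k ∈ S, α k * q ^ k| < q ^ m)
    {p : ℕ} (hp : p ∈ S) : p < m := by
  by_contra! hmp
  have hmS : m ∉ S := fun h => (hS m).mp h hm
  have hHi : (S.filter (m < ·)).Nonempty := ⟨p, mem_filter.mpr ⟨hp, by grind⟩⟩
  obtain ⟨p₀, hp₀, hmin⟩ := (S.filter (m < ·)).exists_min_image id hHi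
  have hp₀' := mem_filter.mp hp₀
  have hlo := abs_sum_mul_pow_lt (T := S.filter (¬ m < ·)) (m := m) (by omega) (fun k _ => hd k)
    fun k hk => by
      obtain ⟨hkS, hkm⟩ := mem_filter.mp hk
      exact (not_lt.mp hkm).lt_of_ne fun h => hmS (h ▸ hkS)
  have hhi : q ^ (m + 1) ≤ |∑ k ∈ S.filter (m < ·), α k * q ^ k| :=
    (pow_le_pow_right₀ (by omega) hp₀'.2).trans <| pow_le_abs_sum_mul_pow (by omega) hp₀
      ((hS _).mp hp₀'.1) (by have := hd p₀; omega) hmin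
  have hsplit := sum_filter_add_sum_filter_not S (m < ·) fun k => α k * q ^ k
  have hqm : 2 * q ^ m ≤ q ^ (m + 1) := by
    rw [pow_succ]; exact mul_comm (q ^ m) 2 ▸ mul_le_mul_of_nonneg_left hq (by positivity)
  rw [abs_lt] at hV hlo
  have : |∑ k ∈ S.filter (m < ·), α k * q ^ k| < 2 * q ^ m := by
    rw [abs_lt]; constructor <;> linarith
  linarith

lemma lt_add_card_of_mem_support (hq : 2 ≤ q) (hd : ∀ k, |α k| ≤ q - 1)
    (hS : ∀ k, k ∈ S ↔ α k ≠ 0) {m : ℕ} (hV : |∑ k ∈ S, α k * q ^ k| < q ^ m) {p : ℕ}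
    (hp : p ∈ S) : p < m + #S := by
  by_contra! h
  have hsub : Icc m p ⊆ S := fun k hk => by
    rw [mem_Icc] at hk
    by_contra hkS
    have := lt_of_mem_support_of_eq_zero hq hd hS (not_not.mp ((hS k).not.mp hkS))
      (hV.trans_le (pow_le_pow_right₀ (by omega) hk.1)) hp
    omega
  have := card_le_card hsub
  rw [Nat.card_Icc] at this
  omega

end Digits

section Weights

variable {α β : ℕ → ℤ} {S T : Finset ℕ} {i C : ℕ}

def supportWeight (C : ℕ) (S : Finset ℕ) : ℕ := ∑ k ∈ S, 2 ^ (C - k)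

lemma supportWeight_lt_of_ssubset (h : T ⊂ S) :
    supportWeight C T < supportWeight C S := by
  obtain ⟨k, hkS, hkT⟩ := exists_of_ssubset h
  exact sum_lt_sum_of_subset h.subset hkS hkT (by positivity) fun _ _ _ => Nat.zero_le _

lemma supportWeight_lt_of_subset_insert_erase {a b : ℕ} (ha : a ∈ S)
    (hab : a < b) (hbC : b ≤ C) (h : T ⊆ insert b (S.erase a)) :
    supportWeight C T < supportWeight C S := by
  have hinsert :
      supportWeight C (insert b (S.erase a)) ≤ 2 ^ (C - b) + supportWeight C (S.erase a) := by
    by_cases hb : b ∈ S.erase a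
    · rw [insert_eq_of_mem hb]; exact Nat.le_add_left _ _
    · rw [supportWeight, sum_insert hb]; rfl
  calc supportWeight C T ≤ supportWeight C (insert b (S.erase a)) := sum_le_sum_of_subset h
    _ ≤ 2 ^ (C - b) + supportWeight C (S.erase a) := hinsert
    _ < 2 ^ (C - a) + supportWeight C (S.erase a) :=
      Nat.add_lt_add_right (Nat.pow_lt_pow_right one_lt_two (by omega)) _
    _ = supportWeight C S := add_sum_erase S (fun k => 2 ^ (C - k)) ha

def signFlips (α : ℕ → ℤ) (S : Finset ℕ) : Finset (ℕ × ℕ) :=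
  (S ×ˢ S).filter fun p => p.1 < p.2 ∧ (∀ t ∈ S, ¬(p.1 < t ∧ t < p.2)) ∧ α p.1 * α p.2 < 0

def flipWeight (α : ℕ → ℤ) (S : Finset ℕ) : ℕ := ∑ p ∈ signFlips α S, (p.1 + 1)

lemma mem_signFlips {p : ℕ × ℕ} :
    p ∈ signFlips α S ↔ p.1 ∈ S ∧ p.2 ∈ S ∧ p.1 < p.2 ∧ (∀ t ∈ S, ¬(p.1 < t ∧ t < p.2)) ∧
      α p.1 * α p.2 < 0 := by
  rw [signFlips, mem_filter, mem_product, and_assoc]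

lemma sum_signFlips_snd_eq_le :
    ∑ p ∈ (signFlips α S).filter (·.2 = i), (p.1 + 1) ≤ i := by
  set E := (signFlips α S).filter (·.2 = i)
  have hE : ∀ p ∈ E, p ∈ signFlips α S ∧ p.2 = i := fun p hp => mem_filter.mp hp
  have hcard : #E ≤ 1 := card_le_one.mpr fun p hp p' hp' => by
    obtain ⟨⟨hp1, -, hlt, hgap, -⟩, hp2⟩ := (hE p hp).imp_left mem_signFlips.mp
    obtain ⟨⟨hp1', -, hlt', hgap', -⟩, hp2'⟩ := (hE p' hp').imp_left mem_signFlips.mp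
    refine Prod.ext ?_ (hp2.trans hp2'.symm)
    by_contra hne
    rcases Nat.lt_or_gt_of_ne hne with h | h
    · exact hgap p'.1 hp1' ⟨h, by omega⟩
    · exact hgap' p.1 hp1 ⟨h, by omega⟩
  calc ∑ p ∈ E, (p.1 + 1) ≤ #E • i := sum_le_card_nsmul _ _ _ fun p hp => by
        have := (mem_signFlips.mp (hE p hp).1).2.2.1; have := (hE p hp).2; omega
    _ ≤ i := by rw [smul_eq_mul]; exact (Nat.mul_le_mul_right i hcard).trans (one_mul i).le

lemma flipWeight_lt (hi : i ∈ S) (hi1 : i + 1 ∈ S) (hα : α i * α (i + 1) < 0)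
    (hβ : 0 < β i * β (i + 1)) (hsign : ∀ k ≠ i, SignType.sign (β k) = SignType.sign (α k)) :
    flipWeight β S < flipWeight α S := by
  have hprod : ∀ k l, k ≠ i → l ≠ i → (β k * β l < 0 ↔ α k * α l < 0) := fun k l hk hl => by
    rw [← sign_eq_neg_one_iff, sign_mul, hsign k hk, hsign l hl, ← sign_mul, sign_eq_neg_one_iff]
  have hflip : (i, i + 1) ∈ signFlips α S :=
    mem_signFlips.mpr ⟨hi, hi1, by omega, fun t _ => by omega, hα⟩
  set E := (signFlips β S).filter (·.2 = i)
  have hsub : signFlips β S \ E ⊆ (signFlips α S).erase (i, i + 1) := by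
    intro p hp
    obtain ⟨hpβ, hpE⟩ := mem_sdiff.mp hp
    have hp2 : p.2 ≠ i := fun h => hpE (mem_filter.mpr ⟨hpβ, h⟩)
    obtain ⟨hp1S, hp2S, hlt, hgap, hneg⟩ := mem_signFlips.mp hpβ
    have hp1 : p.1 ≠ i := by
      rintro hp1
      have : p.2 = i + 1 := by
        by_contra h
        exact hgap (i + 1) hi1 ⟨by omega, by omega⟩
      rw [hp1, this] at hneg
      exact hβ.not_gt hneg
    refine mem_erase.mpr ⟨fun h => hp1 (by rw [h]), ?_⟩
    exact mem_signFlips.mpr ⟨hp1S, hp2S, hlt, hgap, (hprod _ _ hp1 hp2).mp hneg⟩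
  calc flipWeight β S
      = ∑ p ∈ signFlips β S \ E, (p.1 + 1) + ∑ p ∈ E, (p.1 + 1) :=
        (sum_sdiff (filter_subset _ _)).symm
    _ ≤ ∑ p ∈ (signFlips α S).erase (i, i + 1), (p.1 + 1) + i :=
        Nat.add_le_add (sum_le_sum_of_subset hsub) sum_signFlips_snd_eq_le
    _ < ∑ p ∈ (signFlips α S).erase (i, i + 1), (p.1 + 1) + (i + 1) := by omega
    _ = flipWeight α S := sum_erase_add _ _ hflip

end Weights

section Carry

variable {q s : ℤ} {i j k : ℕ} {α : ℕ → ℤ} {S T : Finset ℕ}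

/-- Rules (1)–(4) all have this shape: sign `s = ±1`, a leading digit at `i`, a run of
`s * (q - 1)` at `i + 1, …, j` (empty for rules (1), (2)) and the carry landing at `j + 1`. -/
def carry (q s : ℤ) (i j : ℕ) (α : ℕ → ℤ) (k : ℕ) : ℤ :=
  if k = i then α i - s * q
  else if i < k ∧ k ≤ j then 0
  else if k = j + 1 then α (j + 1) + s
  else α k

structure IsCarry (q s : ℤ) (i j : ℕ) (α : ℕ → ℤ) : Prop where
  sign : s = 1 ∨ s = -1
  le : i ≤ j
  pos : 0 < s * α i
  run : ∀ k, i < k → k ≤ j → α k = s * (q - 1)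
  next : j = i → s * α (i + 1) < 0

def CarryStep (q : ℤ) (α β : ℕ → ℤ) : Prop :=
  ∃ s i j, IsCarry q s i j α ∧ β = carry q s i j α

@[simp]
lemma carry_self : carry q s i j α i = α i - s * q := if_pos rfl

lemma carry_of_mem_Ioc (hik : i < k) (hkj : k ≤ j) : carry q s i j α k = 0 := by
  unfold carry; split_ifs <;> omega

lemma carry_succ (hij : i ≤ j) : carry q s i j α (j + 1) = α (j + 1) + s := by
  unfold carry; split_ifs <;> omega

lemma carry_of_lt_or_lt (hij : i ≤ j) (hk : k < i ∨ j + 1 < k) : carry q s i j α k = α k := by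
  unfold carry; split_ifs <;> omega

lemma _root_.PSStep.carryStep {β : ℕ → ℤ} (h : PSStep q α β) : CarryStep q α β := by
  rcases h with ⟨i, h1, h2, rfl⟩ | ⟨i, h1, h2, rfl⟩ |
    ⟨i, j, hij, h1, hrun, -, rfl⟩ | ⟨i, j, hij, h1, hrun, -, rfl⟩
  · refine ⟨1, i, i, ⟨.inl rfl, le_rfl, by simpa, by omega, fun _ => by simpa⟩, ?_⟩
    funext k; simp only [carry]; split_ifs <;> omega
  · refine ⟨-1, i, i, ⟨.inr rfl, le_rfl, by linarith, by omega, fun _ => by linarith⟩, ?_⟩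
    funext k; simp only [carry]; split_ifs <;> omega
  · refine ⟨1, i, j, ⟨.inl rfl, hij.le, by simpa, fun k h h' => by rw [hrun k h h']; ring,
      by omega⟩, ?_⟩
    funext k; simp only [carry]; split_ifs <;> ring
  · refine ⟨-1, i, j, ⟨.inr rfl, hij.le, by linarith, fun k h h' => by rw [hrun k h h']; ring,
      by omega⟩, ?_⟩
    funext k; simp only [carry]; split_ifs <;> ring

lemma IsCarry.sum_Ico_carry_sub_mul_pow_eq_zero (hc : IsCarry q s i j α) :
    ∑ k ∈ Ico i (j + 2), (carry q s i j α k - α k) * q ^ k = 0 := by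
  have hij := hc.le
  have hgeom := geom_sum_Ico_mul q (show i + 1 ≤ j + 1 by omega)
  have hrun : ∀ k ∈ Ico (i + 1) (j + 1),
      (carry q s i j α k - α k) * q ^ k = -s * (q - 1) * q ^ k := fun k hk => by
      rw [mem_Ico] at hk
      rw [carry_of_mem_Ioc (by omega) (by omega), hc.run k (by omega) (by omega)]; ring
  rw [sum_eq_sum_Ico_succ_bot (show i < j + 2 by omega),
    sum_Ico_succ_top (show i + 1 ≤ j + 1 by omega), sum_congr rfl hrun, ← mul_sum, carry_self,
    carry_succ hc.le]
  linear_combination (-s) * hgeom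

lemma IsCarry.sum_carry_mul_pow (hc : IsCarry q s i j α)
    (hS : ∀ k, k ∈ S ↔ α k ≠ 0) (hT : ∀ k, k ∈ T ↔ carry q s i j α k ≠ 0) :
    ∑ k ∈ T, carry q s i j α k * q ^ k = ∑ k ∈ S, α k * q ^ k := by
  rw [sum_support_mul_pow_eq_of_subset hT (subset_union_right.trans subset_union_left),
    sum_support_mul_pow_eq_of_subset hS (subset_union_left.trans subset_union_left), ← sub_eq_zero,
    ← sum_sub_distrib, ← hc.sum_Ico_carry_sub_mul_pow_eq_zero]
  simp_rw [← sub_mul]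
  refine (sum_subset subset_union_right fun k _ hk => ?_).symm
  rw [mem_Ico, not_and_or, not_le, not_lt] at hk
  rw [carry_of_lt_or_lt hc.le (by omega), sub_self, zero_mul]

lemma IsCarry.mul_self (hc : IsCarry q s i j α) : s * s = 1 := by
  rcases hc.sign with rfl | rfl <;> norm_num

lemma IsCarry.support_subset_of_eq (hc : IsCarry q s i j α) (hji : j = i)
    (hS : ∀ k, k ∈ S ↔ α k ≠ 0) (hT : ∀ k, k ∈ T ↔ carry q s i j α k ≠ 0) : T ⊆ S := by
  subst hji
  intro k hk
  rw [hT] at hk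
  rw [hS]
  rcases eq_or_ne k j with rfl | hkj
  · exact right_ne_zero_of_mul hc.pos.ne'
  rcases eq_or_ne k (j + 1) with rfl | hkj'
  · exact right_ne_zero_of_mul (hc.next rfl).ne
  rwa [carry_of_lt_or_lt le_rfl (by omega)] at hk

lemma IsCarry.support_subset_of_lt (hc : IsCarry q s i j α) (hij : i < j)
    (hS : ∀ k, k ∈ S ↔ α k ≠ 0) (hT : ∀ k, k ∈ T ↔ carry q s i j α k ≠ 0) :
    T ⊆ insert (j + 1) (S.erase (i + 1)) := by
  intro k hk
  rw [hT] at hk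
  rw [mem_insert, mem_erase, hS]
  by_cases hkj : k = j + 1
  · exact .inl hkj
  rcases eq_or_ne k i with rfl | hki
  · exact .inr ⟨by omega, right_ne_zero_of_mul hc.pos.ne'⟩
  by_cases hrun : k ≤ j ∧ i < k
  · exact absurd (carry_of_mem_Ioc hrun.2 hrun.1) hk
  rw [carry_of_lt_or_lt hc.le (by omega)] at hk
  exact .inr ⟨by omega, hk⟩

lemma IsCarry.mem_support_of_mem_Ioc (hq : 1 < q) (hc : IsCarry q s i j α)
    (hS : ∀ k, k ∈ S ↔ α k ≠ 0) {k : ℕ} (hik : i < k) (hkj : k ≤ j) : k ∈ S := by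
  rw [hS, hc.run k hik hkj]
  exact mul_ne_zero (by rcases hc.sign with rfl | rfl <;> norm_num) (by omega)

lemma IsCarry.card_le (hq : 1 < q) (hc : IsCarry q s i j α)
    (hS : ∀ k, k ∈ S ↔ α k ≠ 0) (hT : ∀ k, k ∈ T ↔ carry q s i j α k ≠ 0) : #T ≤ #S := by
  rcases hc.le.lt_or_eq with hij | hij
  · calc #T ≤ #(insert (j + 1) (S.erase (i + 1))) :=
          card_le_card (hc.support_subset_of_lt hij hS hT)
      _ ≤ #(S.erase (i + 1)) + 1 := card_insert_le _ _
      _ = #S := card_erase_add_one (hc.mem_support_of_mem_Ioc hq hS (by omega) hij)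
  · exact card_le_card (hc.support_subset_of_eq hij.symm hS hT)

lemma IsCarry.mul_carry_succ_neg (hc : IsCarry q s i j α) (hji : j = i)
    (hne : carry q s i j α (i + 1) ≠ 0) :
    s * carry q s i j α (i + 1) < 0 := by
  subst hji
  have := hc.next rfl
  rw [carry_succ le_rfl] at hne ⊢
  rcases hc.sign with rfl | rfl <;> grind

lemma IsCarry.mul_carry_self_neg (hd : ∀ k, |α k| ≤ q - 1) (hc : IsCarry q s i j α) :
    s * carry q s i j α i < 0 := by
  have hsα : s * α i ≤ q - 1 := (le_abs_self _).trans <| by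
    rw [abs_mul, (by rcases hc.sign with rfl | rfl <;> rfl : |s| = 1), one_mul]
    exact hd i
  rw [carry_self]
  linear_combination hsα - q * hc.mul_self

lemma sign_eq_of_mul_neg {s x y : ℤ} (hs : s = 1 ∨ s = -1) (hx : s * x < 0) (hy : s * y < 0) :
    SignType.sign x = SignType.sign y := by
  rcases hs with rfl | rfl
  · rw [one_mul] at hx hy
    rw [sign_neg hx, sign_neg hy]
  · rw [neg_one_mul, neg_neg_iff_pos] at hx hy
    rw [sign_pos hx, sign_pos hy]

lemma IsCarry.flipWeight_carry_lt (hd : ∀ k, |α k| ≤ q - 1) (hc : IsCarry q s i j α)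
    (hji : j = i) (hS : ∀ k, k ∈ S ↔ α k ≠ 0) (hS' : ∀ k, k ∈ S ↔ carry q s i j α k ≠ 0) :
    flipWeight (carry q s i j α) S < flipWeight α S := by
  have hαi1 := hc.next hji
  have hi1 : i + 1 ∈ S := (hS _).mpr (right_ne_zero_of_mul hαi1.ne)
  have hβi1 := hc.mul_carry_succ_neg hji ((hS' _).mp hi1)
  refine flipWeight_lt ((hS i).mpr (right_ne_zero_of_mul hc.pos.ne')) hi1 ?_ ?_ fun k hki => ?_
  · linear_combination mul_neg_of_pos_of_neg hc.pos hαi1 - α i * α (i + 1) * hc.mul_self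
  · linear_combination mul_pos_of_neg_of_neg (hc.mul_carry_self_neg hd) hβi1 +
      carry q s i j α i * carry q s i j α (i + 1) * hc.mul_self
  · rcases eq_or_ne k (i + 1) with rfl | hki1
    · exact sign_eq_of_mul_neg hc.sign hβi1 hαi1
    · rw [carry_of_lt_or_lt hc.le (by omega)]

lemma IsCarry.lex_lt (hq : 1 < q) (hd : ∀ k, |α k| ≤ q - 1) (hc : IsCarry q s i j α)
    (hS : ∀ k, k ∈ S ↔ α k ≠ 0) (hT : ∀ k, k ∈ T ↔ carry q s i j α k ≠ 0) {C : ℕ}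
    (hC : ∀ k ∈ S, k < C) :
    toLex (supportWeight C T, flipWeight (carry q s i j α) T) <
      toLex (supportWeight C S, flipWeight α S) := by
  rw [Prod.Lex.toLex_lt_toLex]
  rcases hc.le.lt_or_eq with hij | hij
  · exact .inl <| supportWeight_lt_of_subset_insert_erase
      (hc.mem_support_of_mem_Ioc hq hS (by omega) hij) (by omega)
      (hC j (hc.mem_support_of_mem_Ioc hq hS hij le_rfl)) (hc.support_subset_of_lt hij hS hT)
  rcases (hc.support_subset_of_eq hij.symm hS hT).ssubset_or_eq with hss | rfl
  · exact .inl (supportWeight_lt_of_ssubset hss)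
  · exact .inr ⟨rfl, hc.flipWeight_carry_lt hd hij.symm hS hT⟩

end Carry

section CarryStep

variable {q : ℤ} {α β : ℕ → ℤ} {S T : Finset ℕ}

lemma CarryStep.sum_mul_pow_eq (h : CarryStep q α β) (hS : ∀ k, k ∈ S ↔ α k ≠ 0)
    (hT : ∀ k, k ∈ T ↔ β k ≠ 0) : ∑ k ∈ T, β k * q ^ k = ∑ k ∈ S, α k * q ^ k := by
  obtain ⟨s, i, j, hc, rfl⟩ := h
  exact hc.sum_carry_mul_pow hS hT

lemma CarryStep.card_le (hq : 1 < q) (h : CarryStep q α β) (hS : ∀ k, k ∈ S ↔ α k ≠ 0)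
    (hT : ∀ k, k ∈ T ↔ β k ≠ 0) : #T ≤ #S := by
  obtain ⟨s, i, j, hc, rfl⟩ := h
  exact hc.card_le hq hS hT

lemma CarryStep.lex_lt (hq : 1 < q) (hd : ∀ k, |α k| ≤ q - 1) (h : CarryStep q α β)
    (hS : ∀ k, k ∈ S ↔ α k ≠ 0) (hT : ∀ k, k ∈ T ↔ β k ≠ 0) {C : ℕ} (hC : ∀ k ∈ S, k < C) :
    toLex (supportWeight C T, flipWeight β T) < toLex (supportWeight C S, flipWeight α S) := by
  obtain ⟨s, i, j, hc, rfl⟩ := h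
  exact hc.lex_lt hq hd hS hT hC

end CarryStep

end PowerSum

open PowerSum

/-- the rewriting system `𝒫` is terminating: there is no infinite
sequence of power sums related by steps of `𝒫`. -/
theorem stmt_8 (q : ℤ) (hq : 2 ≤ q) :
    ¬ ∃ f : ℕ → (ℕ → ℤ),
      ∀ n, (∀ i, |f n i| ≤ q - 1) ∧ (∃ m, ∀ i, m ≤ i → f n i = 0) ∧
        PSStep q (f n) (f (n + 1)) := by
  rintro ⟨f, hf⟩
  have hd n := (hf n).1
  have hstep n := (hf n).2.2.carryStep
  choose B hB using fun n => (hf n).2.1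
  set S : ℕ → Finset ℕ := fun n => (range (B n)).filter (f n · ≠ 0)
  have hS : ∀ n k, k ∈ S n ↔ f n k ≠ 0 := fun n k => by
    simp only [S, mem_filter, mem_range, and_iff_right_iff_imp]
    exact fun h => not_le.mp fun hk => h (hB n k hk)
  set V := ∑ k ∈ S 0, f 0 k * q ^ k
  have hV : ∀ n, ∑ k ∈ S n, f n k * q ^ k = V := fun n => by
    induction n with
    | zero => rfl
    | succ n ih => rw [(hstep n).sum_mul_pow_eq (hS n) (hS (n + 1)), ih]
  have hcard : ∀ n, #(S n) ≤ #(S 0) := fun n => by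
    induction n with
    | zero => rfl
    | succ n ih => exact ((hstep n).card_le (by omega) (hS n) (hS (n + 1))).trans ih
  obtain ⟨m, hm⟩ := pow_unbounded_of_one_lt |V| (by omega : (1 : ℤ) < q)
  have hC : ∀ n, ∀ k ∈ S n, k < m + #(S 0) := fun n k hk =>
    (lt_add_card_of_mem_support hq (hd n) (hS n) ((hV n).symm ▸ hm) hk).trans_le
      (by have := hcard n; omega)
  obtain ⟨n, hn⟩ := WellFounded.not_rel_apply_succ (r := (· < ·))
    fun n => toLex (supportWeight (m + #(S 0)) (S n), flipWeight (f n) (S n))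
  exact hn ((hstep n).lex_lt (by omega) (hd n) (hS n) (hS (n + 1)) (hC n))
end

section
/- Let q ≥ 2. For every integer value there is exactly one compact power sum with that value: if S and T are both compact base-q power sums and e(S) = e(T), then S = T (as coefficient sequences). -/
private lemma ps_neg {q : ℤ} {α : ℕ → ℤ} (h : PSReducible q (fun i => -α i)) :
    PSReducible q α := by
  rcases h with ⟨i, h1, h2⟩ | ⟨i, h1, h2⟩ | ⟨i, j, h1, h2, h3, h4⟩ | ⟨i, j, h1, h2, h3, h4⟩
  · simp only [] at h1 h2
    exact Or.inr (Or.inl ⟨i, by linarith, by linarith⟩)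
  · simp only [] at h1 h2
    exact Or.inl ⟨i, by linarith, by linarith⟩
  · simp only [] at h2 h4
    refine Or.inr (Or.inr (Or.inr ⟨i, j, h1, by linarith, fun k hk hk' => ?_, by linarith⟩))
    have := h3 k hk hk'
    simp only [] at this
    linarith
  · simp only [] at h2 h4
    refine Or.inr (Or.inr (Or.inl ⟨i, j, h1, by linarith, fun k hk hk' => ?_, by linarith⟩))
    have := h3 k hk hk'
    simp only [] at this
    linarith

/-- Compactness implies: after a positive digit the next digit is in `[0, q-2]`. -/
private lemma compact_step {q : ℤ} (hq : 2 ≤ q) {α : ℕ → ℤ} {m : ℕ}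
    (hD : ∀ i, |α i| ≤ q - 1) (h0 : ∀ i, m ≤ i → α i = 0)
    (hc : ¬ PSReducible q α) :
    ∀ i, 0 < α i → 0 ≤ α (i + 1) ∧ α (i + 1) ≤ q - 2 := by
  intro i hi
  constructor
  · by_contra h
    exact hc (Or.inl ⟨i, hi, by linarith⟩)
  · by_contra h
    push_neg at h
    have hbd := hD (i + 1)
    rw [abs_le] at hbd
    have hv : α (i + 1) = q - 1 := by omega
    classical
    have hex : ∃ n, α (i + 1 + n) ≠ q - 1 := by
      refine ⟨m, ?_⟩
      rw [h0 _ (by omega)]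
      omega
    have hspec := Nat.find_spec hex
    have hpos : 0 < Nat.find hex := by
      rcases Nat.eq_zero_or_pos (Nat.find hex) with h'' | h''
      · rw [h''] at hspec; simp at hspec; exact absurd hv hspec
      · exact h''
    refine hc (Or.inr (Or.inr (Or.inl ⟨i, i + Nat.find hex, by omega, hi, ?_, ?_⟩)))
    · intro k hk hk'
      have hk2 : k = i + 1 + (k - i - 1) := by omega
      have hmin : ¬ α (i + 1 + (k - i - 1)) ≠ q - 1 := Nat.find_min hex (by omega)
      push_neg at hmin
      rw [hk2]; exact hmin
    · have heq : i + Nat.find hex + 1 = i + 1 + Nat.find hex := by omega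
      rw [heq]
      have hb := hD (i + 1 + Nat.find hex)
      rw [abs_le] at hb
      omega

/-- The carry-propagation lemma: if `α k > 0`, `β k < 0` and the tails have
value difference `-q^(k+1)`, contradiction. -/
private lemma no_carry {q : ℤ} (hq : 2 ≤ q) {α β : ℕ → ℤ} {m : ℕ}
    (hA : ∀ i, 0 < α i → 0 ≤ α (i + 1) ∧ α (i + 1) ≤ q - 2)
    (hB : ∀ i, β i < 0 → β (i + 1) ≤ 0 ∧ -(q - 2) ≤ β (i + 1)) :
    ∀ d k, m ≤ k + 1 + d → 0 < α k → β k < 0 →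
      (∑ i ∈ Finset.Ico (k + 1) m, (α i - β i) * q ^ i) ≠ -q ^ (k + 1) := by
  have hq0 : (0 : ℤ) < q := by linarith
  intro d
  induction d with
  | zero =>
    intro k hm hα hβ heq
    rw [Finset.Ico_eq_empty (by omega : ¬ k + 1 < m), Finset.sum_empty] at heq
    have := pow_pos hq0 (k + 1)
    linarith
  | succ d ih =>
    intro k hm hα hβ heq
    by_cases hmk : m ≤ k + 1
    · rw [Finset.Ico_eq_empty (by omega : ¬ k + 1 < m), Finset.sum_empty] at heq
      have := pow_pos hq0 (k + 1)
      linarith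
    push_neg at hmk
    rw [Finset.sum_eq_sum_Ico_succ_bot hmk] at heq
    have hdvd : q ^ (k + 2) ∣ ∑ i ∈ Finset.Ico (k + 2) m, (α i - β i) * q ^ i :=
      Finset.dvd_sum fun i hi =>
        dvd_mul_of_dvd_right (pow_dvd_pow q (Finset.mem_Ico.1 hi).1) _
    obtain ⟨c, hc⟩ := hdvd
    rw [show k + 1 + 1 = k + 2 from rfl, hc] at heq
    have hpow : (0 : ℤ) < q ^ (k + 1) := pow_pos hq0 (k + 1)
    have key : α (k + 1) - β (k + 1) + q * c = -1 := by
      have h2 : (α (k + 1) - β (k + 1) + q * c) * q ^ (k + 1) = (-1) * q ^ (k + 1) := by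
        linear_combination heq
      exact mul_right_cancel₀ (ne_of_gt hpow) h2
    obtain ⟨hA1, hA2⟩ := hA k hα
    obtain ⟨hB1, hB2⟩ := hB k hβ
    -- α(k+1) - β(k+1) ∈ [0, 2q-4], so q*c ∈ [-2q+3, -1], hence c = -1
    have hcneg : c ≤ -1 := by nlinarith
    have hcgt : -2 < c := by nlinarith
    have hc1 : c = -1 := by omega
    subst hc1
    have hγ : α (k + 1) - β (k + 1) = q - 1 := by linarith
    have hα1 : 0 < α (k + 1) := by linarith
    have hβ1 : β (k + 1) < 0 := by linarith
    refine ih (k + 1) (by omega) hα1 hβ1 ?_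
    rw [hc]
    ring

private lemma main_aux {q : ℤ} (hq : 2 ≤ q) {α β : ℕ → ℤ} {m : ℕ}
    (hαD : ∀ i, |α i| ≤ q - 1) (hβD : ∀ i, |β i| ≤ q - 1)
    (hα0 : ∀ i, m ≤ i → α i = 0) (hβ0 : ∀ i, m ≤ i → β i = 0)
    (hAα : ∀ i, 0 < α i → 0 ≤ α (i + 1) ∧ α (i + 1) ≤ q - 2)
    (hBα : ∀ i, α i < 0 → α (i + 1) ≤ 0 ∧ -(q - 2) ≤ α (i + 1))
    (hAβ : ∀ i, 0 < β i → 0 ≤ β (i + 1) ∧ β (i + 1) ≤ q - 2)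
    (hBβ : ∀ i, β i < 0 → β (i + 1) ≤ 0 ∧ -(q - 2) ≤ β (i + 1)) :
    ∀ d k, m ≤ k + d → (∑ i ∈ Finset.Ico k m, (α i - β i) * q ^ i) = 0 →
      ∀ j, k ≤ j → α j = β j := by
  have hq0 : (0 : ℤ) < q := by linarith
  intro d
  induction d with
  | zero =>
    intro k hm _ j hj
    rw [hα0 j (by omega), hβ0 j (by omega)]
  | succ d ih =>
    intro k hm heq j hj
    by_cases hmk : m ≤ k
    · rw [hα0 j (by omega), hβ0 j (by omega)]
    push_neg at hmk
    rw [Finset.sum_eq_sum_Ico_succ_bot hmk] at heq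
    have hdvd : q ^ (k + 1) ∣ ∑ i ∈ Finset.Ico (k + 1) m, (α i - β i) * q ^ i :=
      Finset.dvd_sum fun i hi =>
        dvd_mul_of_dvd_right (pow_dvd_pow q (Finset.mem_Ico.1 hi).1) _
    obtain ⟨c, hc⟩ := hdvd
    rw [hc] at heq
    have hpow : (0 : ℤ) < q ^ k := pow_pos hq0 k
    have key : α k - β k + q * c = 0 := by
      have h2 : (α k - β k + q * c) * q ^ k = 0 * q ^ k := by
        linear_combination heq
      exact mul_right_cancel₀ (ne_of_gt hpow) h2
    have hαk := hαD k
    have hβk := hβD k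
    rw [abs_le] at hαk hβk
    have hcle : c ≤ 1 := by nlinarith
    have hcge : -1 ≤ c := by nlinarith
    interval_cases c
    · -- c = -1 : α k - β k = q, carry
      exfalso
      have hαpos : 0 < α k := by linarith
      have hβneg : β k < 0 := by linarith
      refine no_carry (m := m) hq hAα hBβ d k (by omega) hαpos hβneg ?_
      rw [hc]; ring
    · -- c = 0 : digits equal, recurse
      have hk : α k = β k := by linarith
      have htail : (∑ i ∈ Finset.Ico (k + 1) m, (α i - β i) * q ^ i) = 0 := by
        rw [hc]; ring
      rcases eq_or_lt_of_le hj with h | h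
      · rw [← h]; exact hk
      · exact ih (k + 1) (by omega) htail j (by omega)
    · -- c = 1 : β k - α k = q, carry the other way
      exfalso
      have hβpos : 0 < β k := by linarith
      have hαneg : α k < 0 := by linarith
      refine no_carry (m := m) hq hAβ
        (fun i hi => by
          have := hBα i hi
          exact ⟨this.1, this.2⟩) d k (by omega) hβpos hαneg ?_
      have hflip : (∑ i ∈ Finset.Ico (k + 1) m, (β i - α i) * q ^ i)
          = -∑ i ∈ Finset.Ico (k + 1) m, (α i - β i) * q ^ i := by
        rw [← Finset.sum_neg_distrib]
        exact Finset.sum_congr rfl fun i _ => by ring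
      rw [hflip, hc]
      ring

/-- for every value there is exactly one compact power sum:
two compact power sums with equal value are equal as coefficient sequences. -/
theorem stmt_10 (q : ℤ) (hq : 2 ≤ q) (α β : ℕ → ℤ)
    (hαD : ∀ i, |α i| ≤ q - 1) (hβD : ∀ i, |β i| ≤ q - 1)
    (m : ℕ) (hα0 : ∀ i, m ≤ i → α i = 0) (hβ0 : ∀ i, m ≤ i → β i = 0)
    (hαc : ¬ PSReducible q α) (hβc : ¬ PSReducible q β)
    (hval : (∑ i ∈ Finset.range m, α i * q ^ i) =
      ∑ i ∈ Finset.range m, β i * q ^ i) :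
    α = β := by
  have hAα := compact_step hq hαD hα0 hαc
  have hAβ := compact_step hq hβD hβ0 hβc
  have hBα : ∀ i, α i < 0 → α (i + 1) ≤ 0 ∧ -(q - 2) ≤ α (i + 1) := by
    intro i hi
    have h := compact_step hq (α := fun i => -α i) (m := m)
      (fun i => by simpa using hαD i) (fun i hi' => by simp [hα0 i hi'])
      (fun h => hαc (ps_neg h)) i (by simpa using hi)
    constructor <;> linarith [h.1, h.2]
  have hBβ : ∀ i, β i < 0 → β (i + 1) ≤ 0 ∧ -(q - 2) ≤ β (i + 1) := by
    intro i hi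
    have h := compact_step hq (α := fun i => -β i) (m := m)
      (fun i => by simpa using hβD i) (fun i hi' => by simp [hβ0 i hi'])
      (fun h => hβc (ps_neg h)) i (by simpa using hi)
    constructor <;> linarith [h.1, h.2]
  have hsum0 : (∑ i ∈ Finset.Ico 0 m, (α i - β i) * q ^ i) = 0 := by
    rw [← Finset.range_eq_Ico]
    have : (∑ i ∈ Finset.range m, (α i - β i) * q ^ i)
        = (∑ i ∈ Finset.range m, α i * q ^ i) - ∑ i ∈ Finset.range m, β i * q ^ i := by
      rw [← Finset.sum_sub_distrib]
      exact Finset.sum_congr rfl fun i _ => by ring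
    rw [this, hval, sub_self]
  funext j
  exact main_aux hq hαD hβD hα0 hβ0 hAα hBα hAβ hBβ m 0 (by omega) hsum0 j (Nat.zero_le j)
end

section
/- Let Π = (Γ, δ) be a finite directed acyclic graph with edge labels in D = {−q+1,...,q−1} (q ≥ 2 fixed), and define the evaluation e(u) = q^{Σ_v δ(u,v)·e(v)} for each node u (so leaves evaluate to 1) and e(M) = Σ_u M(u)·e(u) for markings M : Γ → D. Then the following are equivalent: (i) e(u) ∈ {q^n : n ∈ ℕ} for every node u; (ii) Σ_v δ(u,v)·e(v) ≥ 0 for every node u; (iii) e(M) ∈ ℤ for every marking M. -/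
/-! Along a topological order of the dag, if every exponent `∑ v, δ u v * e v` is nonnegative then
each exponent is an integer combination of earlier values `q ^ n`, hence a natural number, so
`e u` is again a power `q ^ n`; integrality of all markings follows. Conversely, since `q > 1`,
`e u = q ^ x` has `x ≥ 0` exactly when `e u ≥ 1`, and this holds both when `e u` is a power of `q`
and when `e u`, the value of the marking with a single `1` at `u`, is a positive integer. -/

namespace PowerCircuit

variable {Γ : Type*} [Fintype Γ]

def evalMarking (e : Γ → ℝ) (M : Γ → ℤ) : ℝ := ∑ u, (M u : ℝ) * e u

lemma exists_evalMarking_eq_intCast {e : Γ → ℝ} {M : Γ → ℤ}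
    (he : ∀ u, M u ≠ 0 → ∃ z : ℤ, e u = z) : ∃ z : ℤ, evalMarking e M = z := by
  have hterm : ∀ u, ∃ z : ℤ, (M u : ℝ) * e u = z := fun u => by
    by_cases hM : M u = 0
    · exact ⟨0, by simp [hM]⟩
    · obtain ⟨z, hz⟩ := he u hM
      exact ⟨M u * z, by rw [hz]; push_cast; ring⟩
  choose f hf using hterm
  exact ⟨∑ u, f u, by simp only [evalMarking, hf, Int.cast_sum]⟩

lemma evalMarking_pi_single [DecidableEq Γ] (e : Γ → ℝ) (u : Γ) :
    evalMarking e (Pi.single u 1) = e u := by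
  simp [evalMarking, Pi.single_apply]

lemma one_le_rpow_iff_of_one_lt {b x : ℝ} (hb : 1 < b) : 1 ≤ b ^ x ↔ 0 ≤ x := by
  simpa using Real.rpow_le_rpow_left_iff (y := 0) (z := x) hb

lemma exists_pow_eq_of_forall_exponent_nonneg {q : ℕ} {δ : Γ → Γ → ℤ} {r : Γ → ℕ}
    (hacyc : ∀ u v, δ u v ≠ 0 → r v < r u) {e : Γ → ℝ}
    (he : ∀ u, e u = (q : ℝ) ^ evalMarking e (δ u)) (hnn : ∀ u, 0 ≤ evalMarking e (δ u)) :
    ∀ u, ∃ n : ℕ, e u = (q : ℝ) ^ n := by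
  intro u
  induction hru : r u using Nat.strong_induction_on generalizing u with
  | _ k ih =>
    obtain ⟨z, hz⟩ : ∃ z : ℤ, evalMarking e (δ u) = z := by
      refine exists_evalMarking_eq_intCast fun v hv => ?_
      obtain ⟨n, hn⟩ := ih (r v) (hru ▸ hacyc u v hv) v rfl
      exact ⟨(q : ℤ) ^ n, by rw [hn]; push_cast; rfl⟩
    have hz0 : 0 ≤ z := by exact_mod_cast hz ▸ hnn u
    lift z to ℕ using hz0
    exact ⟨z, by rw [he u, hz, Int.cast_natCast, Real.rpow_natCast]⟩

end PowerCircuit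

open PowerCircuit in
theorem stmt_11_general (q : ℕ) (hq : 2 ≤ q) (Γ : Type*) [Fintype Γ]
    (δ : Γ → Γ → ℤ)
    (r : Γ → ℕ) (hacyc : ∀ u v, δ u v ≠ 0 → r v < r u)
    (e : Γ → ℝ)
    (he : ∀ u, e u = Real.rpow q (∑ v, (δ u v : ℝ) * e v)) :
    ((∀ u, ∃ n : ℕ, e u = (q : ℝ) ^ n) ↔
      (∀ u, 0 ≤ ∑ v, (δ u v : ℝ) * e v)) ∧
    ((∀ u, 0 ≤ ∑ v, (δ u v : ℝ) * e v) ↔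
      (∀ M : Γ → ℤ, (∀ u, |M u| ≤ (q : ℤ) - 1) →
        ∃ z : ℤ, (∑ u, (M u : ℝ) * e u) = z)) := by
  classical
  have hq1 : (1 : ℝ) < q := by exact_mod_cast hq
  have he' : ∀ u, e u = (q : ℝ) ^ evalMarking e (δ u) := he
  have exponent_nonneg_of_one_le : ∀ u, 1 ≤ e u → 0 ≤ evalMarking e (δ u) := fun u h =>
    (one_le_rpow_iff_of_one_lt hq1).1 (he' u ▸ h)
  have powers_of_nonneg := exists_pow_eq_of_forall_exponent_nonneg hacyc he'
  refine ⟨⟨fun hpow u => ?_, powers_of_nonneg⟩, ⟨fun hnn M _ => ?_, fun hint u => ?_⟩⟩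
  · obtain ⟨n, hn⟩ := hpow u
    exact exponent_nonneg_of_one_le u (hn ▸ one_le_pow₀ hq1.le)
  · refine exists_evalMarking_eq_intCast fun u _ => ?_
    obtain ⟨n, hn⟩ := powers_of_nonneg hnn u
    exact ⟨(q : ℤ) ^ n, by rw [hn]; push_cast; rfl⟩
  · obtain ⟨z, hz⟩ := hint (Pi.single u 1) fun v => by
      rcases eq_or_ne v u with rfl | hv <;> simp [*] <;> omega
    rw [← evalMarking, evalMarking_pi_single] at hz
    have hpos : 0 < e u := he' u ▸ Real.rpow_pos_of_pos (by linarith) _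
    have hz_pos : 0 < z := Int.cast_pos.1 (hz ▸ hpos)
    exact exponent_nonneg_of_one_le u (hz ▸ by exact_mod_cast hz_pos)

/-- for a finite dag with edge labels in `D = {-(q-1),…,q-1}`
and evaluation `e u = q ^ (∑ v, δ u v · e v)` (real powers), the three
power-circuit conditions are equivalent. -/
theorem stmt_11 (q : ℕ) (hq : 2 ≤ q) (Γ : Type*) [Fintype Γ]
    (δ : Γ → Γ → ℤ) (hD : ∀ u v, |δ u v| ≤ (q : ℤ) - 1)
    (r : Γ → ℕ) (hacyc : ∀ u v, δ u v ≠ 0 → r v < r u)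
    (e : Γ → ℝ)
    (he : ∀ u, e u = Real.rpow q (∑ v, (δ u v : ℝ) * e v)) :
    ((∀ u, ∃ n : ℕ, e u = (q : ℝ) ^ n) ↔
      (∀ u, 0 ≤ ∑ v, (δ u v : ℝ) * e v)) ∧
    ((∀ u, 0 ≤ ∑ v, (δ u v : ℝ) * e v) ↔
      (∀ M : Γ → ℤ, (∀ u, |M u| ≤ (q : ℤ) - 1) →
        ∃ z : ℤ, (∑ u, (M u : ℝ) * e u) = z)) :=
  stmt_11_general q hq Γ δ r hacyc e he
end

section
/- Let q ≥ 2 and let K, M be markings in a power circuit. If u is the node of minimal value in the support of M, then q^{e(K)} divides e(M) if and only if q^{e(K)} divides e(u), which (since e(u) = q^{e(Λ_u)}) holds if and only if e(K) ≤ e(Λ_u). -/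
/-- in a reduced power circuit (node values are distinct powers
`q^(ν v)` of `q`), if `u` is the node of minimal value in the support of a
marking `M`, then `q^k ∣ e(M) ↔ q^k ∣ e(u) ↔ k ≤ e(Λ_u) = ν u`. -/
theorem stmt_14 (q : ℤ) (hq : 2 ≤ q) (Γ : Type*) [Fintype Γ]
    (ν : Γ → ℕ) (hν : Function.Injective ν)
    (M : Γ → ℤ) (hM : ∀ v, |M v| ≤ q - 1)
    (k : ℕ) (u : Γ) (hu : M u ≠ 0)
    (hmin : ∀ v, M v ≠ 0 → ν u ≤ ν v) :
    ((q ^ k ∣ ∑ v, M v * q ^ ν v) ↔ q ^ k ∣ q ^ ν u) ∧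
    ((q ^ k ∣ q ^ ν u) ↔ k ≤ ν u) := by
  classical
  have hq0 : q ≠ 0 := by omega
  have hq1 : (1:ℤ) < q := by omega
  -- if k ≤ ν u then q^k divides the sum
  have hA : ∀ m : ℕ, m ≤ ν u → q ^ m ∣ ∑ v, M v * q ^ ν v := by
    intro m hm
    refine Finset.dvd_sum fun v _ => ?_
    by_cases hv : M v = 0
    · simp [hv]
    · exact Dvd.dvd.mul_left (pow_dvd_pow q (hm.trans (hmin v hv))) _
  -- q^(ν u + 1) does not divide the sum
  have hB : ¬ q ^ (ν u + 1) ∣ ∑ v, M v * q ^ ν v := by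
    intro hd
    have hsplit : (∑ v, M v * q ^ ν v)
        = M u * q ^ ν u + ∑ v ∈ Finset.univ.erase u, M v * q ^ ν v :=
      (Finset.add_sum_erase _ _ (Finset.mem_univ u)).symm
    have hrest : q ^ (ν u + 1) ∣ ∑ v ∈ Finset.univ.erase u, M v * q ^ ν v := by
      refine Finset.dvd_sum fun v hv => ?_
      by_cases hMv : M v = 0
      · simp [hMv]
      · have hne : v ≠ u := Finset.ne_of_mem_erase hv
        have h1 : ν u ≤ ν v := hmin v hMv
        have h2 : ν u ≠ ν v := fun h => hne (hν h.symm)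
        exact Dvd.dvd.mul_left (pow_dvd_pow q (by omega)) _
    have hmu : q ^ (ν u + 1) ∣ M u * q ^ ν u := by
      have := (Dvd.dvd.sub hd hrest)
      rwa [hsplit, add_sub_cancel_right] at this
    have hqMu : q ∣ M u := by
      have hpow : (q : ℤ) ^ ν u ≠ 0 := pow_ne_zero _ hq0
      rcases hmu with ⟨c, hc⟩
      refine ⟨c, ?_⟩
      have : q ^ ν u * M u = q ^ ν u * (q * c) := by ring_nf; ring_nf at hc; linarith [hc]
      exact mul_left_cancel₀ hpow this
    have h1 : q ≤ |M u| :=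
      Int.le_of_dvd (abs_pos.mpr hu) ((dvd_abs _ _).mpr hqMu)
    have := hM u
    omega
  have hpow_iff : (q ^ k ∣ q ^ ν u) ↔ k ≤ ν u := by
    constructor
    · intro hd
      by_contra hlt
      push_neg at hlt
      have : q ^ ν u < q ^ k := pow_lt_pow_right₀ hq1 hlt
      have hle : q ^ k ≤ q ^ ν u :=
        Int.le_of_dvd (pow_pos (by omega) _) hd
      omega
    · exact fun h => pow_dvd_pow q h
  refine ⟨?_, hpow_iff⟩
  rw [hpow_iff]
  constructor
  · intro hd
    by_contra hlt
    push_neg at hlt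
    exact hB ((pow_dvd_pow q (by omega)).trans hd)
  · exact hA k
end
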